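/- arXiv:2303.17298 — 7 statements merged into one kernel-verified Lean document; each statement's English description precedes it below -/
import Mathlib

section
/- Suppose n > ((eg+1)b² + m(eg+1)b)/(me) and a₄ < a < e(m+b)/b, where a₄ = ([en − (b−m)(eg+1)] + √(4m(eg+1)[ne − b(eg+1)]))/n. Then Δ = a₂² − 4a₁a₃ > 0, a₃ > 0, a₂ < 0, and the quadratic a₁y² + a₂y + a₃ = 0 has two distinct positive roots y₁ = (−a₂ + √Δ)/(2a₁) and y₂ = (−a₂ − √Δ)/(2a₁). -/
/-!
Write `k = eg + 1`, `X = na - (en - (b - m)k)` and `s = √(4mk(ne - bk))`, so that `a > a₄` says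
`s < X`. The discriminant is the ring identity `Δ = X² - s²`, hence positive. The bound on `n`
says `s > 2bk`, and `a₂ = 2bk - X < 2bk - s < 0`; `a₃ > 0` is the upper bound on `a`. A real
quadratic with `a₁ > 0`, `a₂ < 0`, `a₃ > 0` and `Δ > 0` has two distinct positive roots, since
`√Δ < |a₂|`.
-/

open Real

section Quadratic

variable {a b c : ℝ}

theorem quadratic_smaller_root_pos (ha : 0 < a) (hb : b < 0) (hc : 0 < c) :
    0 < (-b - √(discrim a b c)) / (2 * a) := by
  have hsqrt : √(discrim a b c) < -b :=
    (sqrt_lt' (neg_pos.2 hb)).2 (by unfold discrim; nlinarith)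
  exact div_pos (by linarith) (by positivity)

theorem quadratic_roots_lt (ha : 0 < a) {d : ℝ} (hd : 0 < d) :
    (-b - √d) / (2 * a) < (-b + √d) / (2 * a) :=
  div_lt_div_of_pos_right (by linarith [sqrt_pos.2 hd]) (by positivity)

end Quadratic

section Coefficients

variable {a b e k m n : ℝ}

theorem discrim_coeffs_pos
    (hs : √(4 * m * k * (n * e - b * k)) < n * a - (e * n - (b - m) * k)) :
    0 < ((b + m) * k + n * (e - a)) ^ 2 - 4 * (k * n) * (e * (b + m) - a * b) := by
  have hX : 4 * m * k * (n * e - b * k) < (n * a - (e * n - (b - m) * k)) ^ 2 :=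
    (sqrt_lt' ((sqrt_nonneg _).trans_lt hs)).1 hs
  nlinarith

theorem linear_coeff_neg (hb : 0 < b) (hk : 0 < k) (hn : k * b ^ 2 + m * k * b < n * (m * e))
    (hs : √(4 * m * k * (n * e - b * k)) < n * a - (e * n - (b - m) * k)) :
    (b + m) * k + n * (e - a) < 0 := by
  have h2bk : 2 * b * k < √(4 * m * k * (n * e - b * k)) :=
    (lt_sqrt (by positivity)).2 (by nlinarith)
  linarith

end Coefficients

theorem two_distinct_positive_roots_general
    (a b e g m n : ℝ) (hb : 0 < b) (hg : 0 < g) (hm : 0 < m) (hn : 0 < n)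
    (he0 : 0 < e)
    (a1 a2 a3 a4 Δ y1 y2 : ℝ)
    (ha1 : a1 = (e * g + 1) * n)
    (ha2 : a2 = (b + m) * (e * g + 1) + n * (e - a))
    (ha3 : a3 = e * (b + m) - a * b)
    (ha4 : a4 = ((e * n - (b - m) * (e * g + 1)) +
        Real.sqrt (4 * m * (e * g + 1) * (n * e - b * (e * g + 1)))) / n)
    (hΔ : Δ = a2 ^ 2 - 4 * a1 * a3)
    (hy1 : y1 = (-a2 + Real.sqrt Δ) / (2 * a1))
    (hy2 : y2 = (-a2 - Real.sqrt Δ) / (2 * a1))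
    (hn' : n > ((e * g + 1) * b ^ 2 + m * (e * g + 1) * b) / (m * e))
    (ha' : a4 < a) (ha'' : a < e * (m + b) / b) :
    Δ > 0 ∧ a3 > 0 ∧ a2 < 0 ∧
      0 < y2 ∧ y2 < y1 ∧
      a1 * y1 ^ 2 + a2 * y1 + a3 = 0 ∧ a1 * y2 ^ 2 + a2 * y2 + a3 = 0 := by
  have hk : 0 < e * g + 1 := by positivity
  rw [gt_iff_lt, div_lt_iff₀ (by positivity)] at hn'
  rw [ha4, div_lt_iff₀ hn] at ha'
  have hs : √(4 * m * (e * g + 1) * (n * e - b * (e * g + 1))) <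
      n * a - (e * n - (b - m) * (e * g + 1)) := by linarith
  have hΔpos : 0 < Δ := hΔ ▸ ha1 ▸ ha2 ▸ ha3 ▸ discrim_coeffs_pos hs
  have ha2neg : a2 < 0 := ha2 ▸ linear_coeff_neg hb hk hn' hs
  have ha3pos : 0 < a3 := by
    rw [lt_div_iff₀ hb] at ha''
    linarith
  have ha1pos : 0 < a1 := ha1 ▸ by positivity
  have hdisc : discrim a1 a2 a3 = Δ := by rw [discrim, hΔ]
  have hroots := quadratic_eq_zero_iff ha1pos.ne' (hdisc.trans (mul_self_sqrt hΔpos.le).symm)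
  refine ⟨hΔpos, ha3pos, ha2neg, ?_, ?_, ?_, ?_⟩
  · exact hy2 ▸ hdisc ▸ quadratic_smaller_root_pos ha1pos ha2neg ha3pos
  · exact hy1 ▸ hy2 ▸ quadratic_roots_lt ha1pos hΔpos
  · rw [sq]; exact (hroots y1).2 (Or.inl hy1)
  · rw [sq]; exact (hroots y2).2 (Or.inr hy2)

theorem two_distinct_positive_roots
    (a b e g m n : ℝ) (hb : 0 < b) (hg : 0 < g) (hm : 0 < m) (hn : 0 < n)
    (he0 : 0 < e) (he1 : e < 1)
    (a1 a2 a3 a4 Δ y1 y2 : ℝ)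
    (ha1 : a1 = (e * g + 1) * n)
    (ha2 : a2 = (b + m) * (e * g + 1) + n * (e - a))
    (ha3 : a3 = e * (b + m) - a * b)
    (ha4 : a4 = ((e * n - (b - m) * (e * g + 1)) +
        Real.sqrt (4 * m * (e * g + 1) * (n * e - b * (e * g + 1)))) / n)
    (hΔ : Δ = a2 ^ 2 - 4 * a1 * a3)
    (hy1 : y1 = (-a2 + Real.sqrt Δ) / (2 * a1))
    (hy2 : y2 = (-a2 - Real.sqrt Δ) / (2 * a1))
    (hn' : n > ((e * g + 1) * b ^ 2 + m * (e * g + 1) * b) / (m * e))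
    (ha' : a4 < a) (ha'' : a < e * (m + b) / b) :
    Δ > 0 ∧ a3 > 0 ∧ a2 < 0 ∧
      0 < y2 ∧ y2 < y1 ∧
      a1 * y1 ^ 2 + a2 * y1 + a3 = 0 ∧ a1 * y2 ^ 2 + a2 * y2 + a3 = 0 :=
  two_distinct_positive_roots_general a b e g m n hb hg hm hn he0 a1 a2 a3 a4 Δ y1 y2 ha1 ha2 ha3
    ha4 hΔ hy1 hy2 hn' ha' ha''
end

section
/- Suppose n > ((eg+1)b² + m(eg+1)b)/(me) and a = a₄ := ([en − (b−m)(eg+1)] + √(4m(eg+1)[ne − b(eg+1)]))/n. Then the discriminant Δ = a₂² − 4a₁a₃ equals zero and the quadratic a₁y² + a₂y + a₃ = 0 has exactly one (double) positive root y₃ = −a₂/(2a₁). -/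
/-!
Multiplying the formula for `a` by `n` makes the linear coefficient `a₂ = 2b(eg+1) - s` and the
discriminant `s² - 4m(eg+1)(ne - b(eg+1))` with `s` the square root in the formula, so `Δ = 0`.
The bound on `n` says exactly that `(2b(eg+1))²` lies below the radicand, hence `s > 2b(eg+1)`,
`a₂ < 0`, and the double root `-a₂/(2a₁)` is positive.
-/

namespace DoublePositiveRoot

variable {a b e k m n s : ℝ}

lemma linear_coeff_eq (ha : n * a = e * n - (b - m) * k + s) :
    (b + m) * k + n * (e - a) = 2 * b * k - s := by
  linear_combination -ha

lemma discrim_eq (ha : n * a = e * n - (b - m) * k + s) :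
    discrim (k * n) ((b + m) * k + n * (e - a)) (e * (m + b) - a * b) =
      s ^ 2 - 4 * m * k * (n * e - b * k) := by
  rw [discrim, linear_coeff_eq ha]
  linear_combination (4 * b * k) * ha

lemma sq_lt_radicand (hk : 0 < k) (hme : 0 < m * e)
    (hn : n > (k * b ^ 2 + m * k * b) / (m * e)) :
    (2 * b * k) ^ 2 < 4 * m * k * (n * e - b * k) := by
  have h := (div_lt_iff₀ hme).mp hn
  nlinarith [mul_lt_mul_of_pos_left h hk]

end DoublePositiveRoot

theorem double_positive_root_general
    (a b e g m n : ℝ) (hg : 0 < g) (hm : 0 < m) (hn : 0 < n)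
    (he0 : 0 < e)
    (a1 a2 a3 y3 : ℝ)
    (ha1 : a1 = (e * g + 1) * n)
    (ha2 : a2 = (b + m) * (e * g + 1) + n * (e - a))
    (ha3 : a3 = e * (m + b) - a * b)
    (hy3 : y3 = -a2 / (2 * a1))
    (hn' : n > ((e * g + 1) * b ^ 2 + m * (e * g + 1) * b) / (m * e))
    (ha : a = ((e * n - (b - m) * (e * g + 1)) +
        Real.sqrt (4 * m * (e * g + 1) * (n * e - b * (e * g + 1)))) / n) :
    a2 ^ 2 - 4 * a1 * a3 = 0 ∧ 0 < y3 ∧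
      a1 * y3 ^ 2 + a2 * y3 + a3 = 0 ∧
      ∀ y : ℝ, a1 * y ^ 2 + a2 * y + a3 = 0 → y = y3 := by
  have hk : 0 < e * g + 1 := by positivity
  have hlt := DoublePositiveRoot.sq_lt_radicand hk (mul_pos hm he0) hn'
  set s := Real.sqrt (4 * m * (e * g + 1) * (n * e - b * (e * g + 1)))
  have hna : n * a = e * n - (b - m) * (e * g + 1) + s := by rw [ha, mul_div_cancel₀ _ hn.ne']
  have ha1pos : 0 < a1 := by rw [ha1]; positivity
  have hdisc : discrim a1 a2 a3 = 0 := by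
    rw [ha1, ha2, ha3, DoublePositiveRoot.discrim_eq hna,
      Real.sq_sqrt ((sq_nonneg _).trans hlt.le), sub_self]
  have hy3pos : 0 < y3 := by
    rw [hy3, ha2, DoublePositiveRoot.linear_coeff_eq hna, neg_sub]
    exact div_pos (sub_pos.mpr (Real.lt_sqrt_of_sq_lt hlt)) (by positivity)
  have hroot (y : ℝ) := quadratic_eq_zero_iff_of_discrim_eq_zero ha1pos.ne' hdisc y
  simp only [← sq, ← hy3] at hroot
  exact ⟨hdisc, hy3pos, (hroot y3).mpr rfl, fun y => (hroot y).mp⟩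

theorem double_positive_root
    (a b e g m n : ℝ) (hb : 0 < b) (hg : 0 < g) (hm : 0 < m) (hn : 0 < n)
    (he0 : 0 < e) (he1 : e < 1)
    (a1 a2 a3 y3 : ℝ)
    (ha1 : a1 = (e * g + 1) * n)
    (ha2 : a2 = (b + m) * (e * g + 1) + n * (e - a))
    (ha3 : a3 = e * (m + b) - a * b)
    (hy3 : y3 = -a2 / (2 * a1))
    (hn' : n > ((e * g + 1) * b ^ 2 + m * (e * g + 1) * b) / (m * e))
    (ha : a = ((e * n - (b - m) * (e * g + 1)) +
        Real.sqrt (4 * m * (e * g + 1) * (n * e - b * (e * g + 1)))) / n) :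
    a2 ^ 2 - 4 * a1 * a3 = 0 ∧ 0 < y3 ∧
      a1 * y3 ^ 2 + a2 * y3 + a3 = 0 ∧
      ∀ y : ℝ, a1 * y ^ 2 + a2 * y + a3 = 0 → y = y3 :=
  double_positive_root_general a b e g m n hg hm hn he0 a1 a2 a3 y3 ha1 ha2 ha3 hy3 hn' ha
end

section
/- For an endemic equilibrium (x, y) with y > 0 satisfying x/(1+gy) = 1 + m/(b+ny), the trace of the Jacobian satisfies tr(J) = −H(y)/((1+gy)(b+ny)²) where H(y) = [e + (eg+g+1)y](b+ny)² − m(n−bg)y. -/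
theorem div_sq_eq_div_of_div_eq {K : Type*} [Field K] {x p q : K} (h : x / p = q) :
    x / p ^ 2 = q / p := by
  rw [sq, ← div_div, h]

theorem trace_formula_at_endemic_equilibrium_general
    (b e g m n x y : ℝ) (hb : 0 < b) (hg : 0 < g)
    (hn : 0 < n) (hy : 0 < y)
    (heq : x / (1 + g * y) = 1 + m / (b + n * y)) :
    (-e - y / (1 + g * y)) + (x / (1 + g * y) ^ 2 - 1 - m * b / (b + n * y) ^ 2) =
      -((e + (e * g + g + 1) * y) * (b + n * y) ^ 2 - m * (n - b * g) * y) /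
        ((1 + g * y) * (b + n * y) ^ 2) := by
  have hgy : 1 + g * y ≠ 0 := by positivity
  have hny : b + n * y ≠ 0 := by positivity
  rw [div_sq_eq_div_of_div_eq heq]
  field_simp
  ring

theorem trace_formula_at_endemic_equilibrium
    (a b e g m n x y : ℝ) (ha : 0 < a) (hb : 0 < b) (hg : 0 < g) (hm : 0 < m)
    (hn : 0 < n) (he : 0 < e) (hy : 0 < y)
    (heq : x / (1 + g * y) = 1 + m / (b + n * y)) :
    (-e - y / (1 + g * y)) + (x / (1 + g * y) ^ 2 - 1 - m * b / (b + n * y) ^ 2) =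
      -((e + (e * g + g + 1) * y) * (b + n * y) ^ 2 - m * (n - b * g) * y) /
        ((1 + g * y) * (b + n * y) ^ 2) :=
  trace_formula_at_endemic_equilibrium_general b e g m n x y hb hg hn hy heq
end

section
/- For an endemic equilibrium (x, y) with y > 0 satisfying x/(1+gy) = 1 + m/(b+ny), the determinant of the Jacobian satisfies det(J) = y·M(y)/((1+gy)(b+ny)²) where M(y) = (eg+1)(b+ny)² + m[b(eg+1) − ne]. -/
theorem jacobian_det_eq_of_equilibrium {K : Type*} [Field K] {b e g m n x y : K}
    (hP : 1 + g * y ≠ 0) (hQ : b + n * y ≠ 0)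
    (heq : x / (1 + g * y) = 1 + m / (b + n * y)) :
    (-e - y / (1 + g * y)) * (x / (1 + g * y) ^ 2 - 1 - m * b / (b + n * y) ^ 2) -
        (-(x / (1 + g * y) ^ 2)) * (y / (1 + g * y)) =
      y * ((e * g + 1) * (b + n * y) ^ 2 + m * (b * (e * g + 1) - n * e)) /
        ((1 + g * y) * (b + n * y) ^ 2) := by
  rw [div_eq_iff hP] at heq
  subst heq
  -- `field_simp` normalizes `g * y` to `y * g` before looking for the nonvanishing hypotheses.
  rw [mul_comm g, mul_comm n] at *
  field_simp
  ring

theorem det_formula_at_endemic_equilibrium_general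
    (b e g m n x y : ℝ) (hb : 0 < b) (hg : 0 < g)
    (hn : 0 < n) (hy : 0 < y)
    (heq : x / (1 + g * y) = 1 + m / (b + n * y)) :
    (-e - y / (1 + g * y)) * (x / (1 + g * y) ^ 2 - 1 - m * b / (b + n * y) ^ 2) -
        (-(x / (1 + g * y) ^ 2)) * (y / (1 + g * y)) =
      y * ((e * g + 1) * (b + n * y) ^ 2 + m * (b * (e * g + 1) - n * e)) /
        ((1 + g * y) * (b + n * y) ^ 2) :=
  jacobian_det_eq_of_equilibrium (by positivity) (by positivity) heq

theorem det_formula_at_endemic_equilibrium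
    (a b e g m n x y : ℝ) (ha : 0 < a) (hb : 0 < b) (hg : 0 < g) (hm : 0 < m)
    (hn : 0 < n) (he : 0 < e) (hy : 0 < y)
    (heq : x / (1 + g * y) = 1 + m / (b + n * y)) :
    (-e - y / (1 + g * y)) * (x / (1 + g * y) ^ 2 - 1 - m * b / (b + n * y) ^ 2) -
        (-(x / (1 + g * y) ^ 2)) * (y / (1 + g * y)) =
      y * ((e * g + 1) * (b + n * y) ^ 2 + m * (b * (e * g + 1) - n * e)) /
        ((1 + g * y) * (b + n * y) ^ 2) :=
  det_formula_at_endemic_equilibrium_general b e g m n x y hb hg hn hy heq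
end

section
/- Suppose n > ((eg+1)b² + m(eg+1)b)/(me) and a = a₄, and let y₃ = −a₂/(2a₁) be the double positive root of a₁y² + a₂y + a₃ = 0. Then M(y₃) = (eg+1)(b+ny₃)² + m[b(eg+1) − ne] = 0, so the determinant of the Jacobian at the equilibrium E₃ vanishes (the equilibrium is degenerate). -/
/-! At `a = a₄` the square root in `a₄` is `s = √(4mc(ne − bc))` with `c = eg + 1`, and the vertex
`y₃ = −a₂/(2a₁)` satisfies `b + ny₃ = s/(2c)`. Hence `c(b + ny₃)² = s²/(4c) = m(ne − bc)`, which is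
exactly the vanishing of `M(y₃)`. -/

lemma sub_pos_of_gt_div {b c e m n : ℝ} (hc : 0 < c) (hm : 0 < m) (he : 0 < e)
    (hn : n > (c * b ^ 2 + m * c * b) / (m * e)) : 0 < n * e - b * c := by
  rw [gt_iff_lt, div_lt_iff₀ (by positivity)] at hn
  nlinarith [mul_nonneg hc.le (sq_nonneg b)]

lemma add_mul_vertex_eq {b c e m n : ℝ} (hc : c ≠ 0) (hn : n ≠ 0) (s : ℝ) :
    b + n * (-((b + m) * c + n * (e - ((e * n - (b - m) * c) + s) / n)) / (2 * (c * n)))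
      = s / (2 * c) := by
  field_simp
  ring

lemma mul_half_div_sq_add_eq_zero {b c e m n : ℝ} (hc : 0 < c) (hm : 0 ≤ m)
    (hD : 0 ≤ n * e - b * c) :
    c * (√(4 * m * c * (n * e - b * c)) / (2 * c)) ^ 2 + m * (b * c - n * e) = 0 := by
  rw [div_pow, Real.sq_sqrt (by positivity)]
  field_simp
  ring

theorem E3_degenerate_general
    (b e g m n : ℝ) (hg : 0 < g) (hm : 0 < m) (hn : 0 < n)
    (he0 : 0 < e)
    (a4 a1 a2 y3 : ℝ)
    (ha4 : a4 = ((e * n - (b - m) * (e * g + 1)) +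
        Real.sqrt (4 * m * (e * g + 1) * (n * e - b * (e * g + 1)))) / n)
    (ha1 : a1 = (e * g + 1) * n)
    (ha2 : a2 = (b + m) * (e * g + 1) + n * (e - a4))
    (hy3 : y3 = -a2 / (2 * a1))
    (hn' : n > ((e * g + 1) * b ^ 2 + m * (e * g + 1) * b) / (m * e)) :
    (e * g + 1) * (b + n * y3) ^ 2 + m * (b * (e * g + 1) - n * e) = 0 ∧
      y3 * ((e * g + 1) * (b + n * y3) ^ 2 + m * (b * (e * g + 1) - n * e)) /
        ((1 + g * y3) * (b + n * y3) ^ 2) = 0 := by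
  have hc : 0 < e * g + 1 := by positivity
  have hM : (e * g + 1) * (b + n * y3) ^ 2 + m * (b * (e * g + 1) - n * e) = 0 := by
    subst ha4 ha1 ha2 hy3
    rw [add_mul_vertex_eq hc.ne' hn.ne']
    exact mul_half_div_sq_add_eq_zero hc hm.le (sub_pos_of_gt_div hc hm he0 hn').le
  exact ⟨hM, by rw [hM, mul_zero, zero_div]⟩

theorem E3_degenerate
    (b e g m n : ℝ) (hb : 0 < b) (hg : 0 < g) (hm : 0 < m) (hn : 0 < n)
    (he0 : 0 < e) (he1 : e < 1)
    (a4 a1 a2 y3 : ℝ)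
    (ha4 : a4 = ((e * n - (b - m) * (e * g + 1)) +
        Real.sqrt (4 * m * (e * g + 1) * (n * e - b * (e * g + 1)))) / n)
    (ha1 : a1 = (e * g + 1) * n)
    (ha2 : a2 = (b + m) * (e * g + 1) + n * (e - a4))
    (hy3 : y3 = -a2 / (2 * a1))
    (hn' : n > ((e * g + 1) * b ^ 2 + m * (e * g + 1) * b) / (m * e)) :
    (e * g + 1) * (b + n * y3) ^ 2 + m * (b * (e * g + 1) - n * e) = 0 ∧
      y3 * ((e * g + 1) * (b + n * y3) ^ 2 + m * (b * (e * g + 1) - n * e)) /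
        ((1 + g * y3) * (b + n * y3) ^ 2) = 0 :=
  E3_degenerate_general b e g m n hg hm hn he0 a4 a1 a2 y3 ha4 ha1 ha2 hy3 hn'
end

section
/- Under the hypotheses n > ((eg+1)b² + m(eg+1)b)/(me) and a₄ < a < e(m+b)/b, with y₂ = (−a₂ − √Δ)/(2a₁) and y₃ = −a₂/(2a₁), one has y₂ < y₃, M(y₂) < 0, hence det(J) at E₂ is negative and E₂ is a saddle point. -/
/-!
Put `c = eg + 1`, `Q = ne - bc` and `P = na + c(b - m) - ne`. Then `Δ = P² - 4c·mQ` and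
`b + n y₂ = (P - √Δ) / (2c)`, so `M(y₂) = c z² - mQ` where `z` is the smaller root of
`c z² - P z + mQ`. The bound on `n` gives `cb² < mQ`, and `a > a₄` is `4cmQ < P²` with `P > 0`;
hence both roots are positive and `c z² < c z z' = mQ`, i.e. `M(y₂) < 0`. The bound `a < e(m+b)/b`
makes `a₃ > 0`, and with `a₂ = 2cb - P < 0` the smaller root `y₂` of `a₁y² + a₂y + a₃` is positive.
-/

lemma quadratic_smaller_root_pos_s17 {a₁ a₂ a₃ : ℝ} (ha₁ : 0 < a₁) (ha₂ : a₂ < 0) (ha₃ : 0 < a₃) :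
    0 < (-a₂ - √(a₂ ^ 2 - 4 * a₁ * a₃)) / (2 * a₁) := by
  have hsqrt : √(a₂ ^ 2 - 4 * a₁ * a₃) < -a₂ :=
    (Real.sqrt_lt' (neg_pos.2 ha₂)).2 (by nlinarith [mul_pos ha₁ ha₃])
  exact div_pos (sub_pos.2 hsqrt) (by positivity)

lemma quadratic_smaller_root_lt_vertex {a₁ a₂ Δ : ℝ} (ha₁ : 0 < a₁) (hΔ : 0 < Δ) :
    (-a₂ - √Δ) / (2 * a₁) < -a₂ / (2 * a₁) :=
  div_lt_div_of_pos_right (by linarith [Real.sqrt_pos.2 hΔ]) (by positivity)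

lemma mul_sq_smaller_root_lt {c P K : ℝ} (hc : 0 < c) (hP : 0 < P) (hK : 0 < K)
    (hΔ : 0 < P ^ 2 - 4 * c * K) :
    c * ((P - √(P ^ 2 - 4 * c * K)) / (2 * c)) ^ 2 < K := by
  set s := √(P ^ 2 - 4 * c * K)
  have hs : 0 < s := Real.sqrt_pos.2 hΔ
  have hsP : s < P := (Real.sqrt_lt' hP).2 (by nlinarith [mul_pos hc hK])
  have hs2 : s ^ 2 = P ^ 2 - 4 * c * K := Real.sq_sqrt hΔ.le
  set z := (P - s) / (2 * c)
  have hz : 2 * c * z = P - s := by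
    simp only [z]
    field_simp
  have key : 4 * c * (c * z ^ 2 - K) = 2 * s * (s - P) := by
    linear_combination (2 * c * z + P - s) * hz - hs2
  have hneg : 4 * c * (c * z ^ 2 - K) < 0 :=
    key ▸ mul_neg_of_pos_of_neg (by positivity) (sub_neg.2 hsP)
  exact sub_neg.1 (neg_of_mul_neg_right hneg (by positivity))

theorem E2_saddle_general
    (a b e g m n : ℝ) (hb : 0 < b) (hg : 0 < g) (hm : 0 < m) (hn : 0 < n)
    (he0 : 0 < e)
    (a1 a2 a3 a4 Δ y2 y3 : ℝ)
    (ha1 : a1 = (e * g + 1) * n)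
    (ha2 : a2 = (b + m) * (e * g + 1) + n * (e - a))
    (ha3 : a3 = e * (m + b) - a * b)
    (ha4 : a4 = ((e * n - (b - m) * (e * g + 1)) +
        Real.sqrt (4 * m * (e * g + 1) * (n * e - b * (e * g + 1)))) / n)
    (hΔ : Δ = a2 ^ 2 - 4 * a1 * a3)
    (hy2 : y2 = (-a2 - Real.sqrt Δ) / (2 * a1))
    (hy3 : y3 = -a2 / (2 * a1))
    (hn' : n > ((e * g + 1) * b ^ 2 + m * (e * g + 1) * b) / (m * e))
    (ha' : a4 < a) (ha'' : a < e * (m + b) / b) :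
    y2 < y3 ∧
      (e * g + 1) * (b + n * y2) ^ 2 + m * (b * (e * g + 1) - n * e) < 0 ∧
      y2 * ((e * g + 1) * (b + n * y2) ^ 2 + m * (b * (e * g + 1) - n * e)) /
        ((1 + g * y2) * (b + n * y2) ^ 2) < 0 := by
  set c := e * g + 1
  have hc : 0 < c := by positivity
  have hcb : c * b ^ 2 < m * (n * e - b * c) := by
    rw [gt_iff_lt, div_lt_iff₀ (by positivity)] at hn'
    linarith
  set P := n * a + c * (b - m) - n * e
  have hsqrt : √(4 * m * c * (n * e - b * c)) < P := by
    rw [ha4, div_lt_iff₀ hn] at ha'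
    linarith
  have hP : 0 < P := (Real.sqrt_nonneg _).trans_lt hsqrt
  have hPsq : 4 * c * (m * (n * e - b * c)) < P ^ 2 := by
    rw [Real.sqrt_lt' hP] at hsqrt
    linarith
  have h2cb : 2 * c * b < P := lt_of_pow_lt_pow_left₀ 2 hP.le (by nlinarith)
  have hΔP : Δ = P ^ 2 - 4 * c * (m * (n * e - b * c)) := by
    rw [hΔ, ha1, ha2, ha3]
    ring
  have ha1_pos : 0 < a1 := ha1 ▸ by positivity
  have ha2_neg : a2 < 0 := by
    rw [ha2]
    linarith
  have ha3_pos : 0 < a3 := by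
    rw [lt_div_iff₀ hb] at ha''
    rw [ha3]
    linarith
  have hy2_pos : 0 < y2 := hy2 ▸ hΔ ▸ quadratic_smaller_root_pos_s17 ha1_pos ha2_neg ha3_pos
  have hz : b + n * y2 = (P - √Δ) / (2 * c) := by
    rw [hy2, ha1, ha2]
    field_simp
    ring
  have hM : c * (b + n * y2) ^ 2 + m * (b * c - n * e) < 0 := by
    have := mul_sq_smaller_root_lt hc hP (by nlinarith) (sub_pos.2 hPsq)
    rw [hz, hΔP]
    linarith
  refine ⟨hy2 ▸ hy3 ▸ quadratic_smaller_root_lt_vertex ha1_pos (hΔP ▸ sub_pos.2 hPsq), hM, ?_⟩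
  exact div_neg_of_neg_of_pos (mul_neg_of_pos_of_neg hy2_pos hM) (by positivity)

theorem E2_saddle
    (a b e g m n : ℝ) (hb : 0 < b) (hg : 0 < g) (hm : 0 < m) (hn : 0 < n)
    (he0 : 0 < e) (he1 : e < 1)
    (a1 a2 a3 a4 Δ y2 y3 : ℝ)
    (ha1 : a1 = (e * g + 1) * n)
    (ha2 : a2 = (b + m) * (e * g + 1) + n * (e - a))
    (ha3 : a3 = e * (m + b) - a * b)
    (ha4 : a4 = ((e * n - (b - m) * (e * g + 1)) +
        Real.sqrt (4 * m * (e * g + 1) * (n * e - b * (e * g + 1)))) / n)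
    (hΔ : Δ = a2 ^ 2 - 4 * a1 * a3)
    (hy2 : y2 = (-a2 - Real.sqrt Δ) / (2 * a1))
    (hy3 : y3 = -a2 / (2 * a1))
    (hn' : n > ((e * g + 1) * b ^ 2 + m * (e * g + 1) * b) / (m * e))
    (ha' : a4 < a) (ha'' : a < e * (m + b) / b) :
    y2 < y3 ∧
      (e * g + 1) * (b + n * y2) ^ 2 + m * (b * (e * g + 1) - n * e) < 0 ∧
      y2 * ((e * g + 1) * (b + n * y2) ^ 2 + m * (b * (e * g + 1) - n * e)) /
        ((1 + g * y2) * (b + n * y2) ^ 2) < 0 :=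
  E2_saddle_general a b e g m n hb hg hm hn he0 a1 a2 a3 a4 Δ y2 y3 ha1 ha2 ha3 ha4 hΔ hy2 hy3 hn'
    ha' ha''
end

section
/- Under the hypotheses n > ((eg+1)b² + m(eg+1)b)/(me) and a₄ < a ≤ e(m+b)/b, with y₁ = (−a₂ + √Δ)/(2a₁) and y₃ = −a₂/(2a₁), one has y₃ < y₁ and M(y₁) > 0, hence det(J) at the equilibrium E₁ is positive. -/
/-!
Write `P = e g + 1` and `K = 4 m P (n e - b P)`. Then `4 P · M(y) = (2 P (b + n y))² - K`, and
with `c = 2 b P - a₂` the discriminant is `Δ = c² - K`, while `2 P (b + n y₁) = c + √Δ`.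
The bound on `n` says `2 b P < √K`, and `a₄ < a` says `√K < c`. Hence `Δ > 0`, so `y₃ < y₁`;
`2 P (b + n y₁) ≥ c > √K`, so `M(y₁) > 0`; and `2 P n y₁ = c + √Δ - 2 b P > 0`.
-/

section

variable {P b e m n : ℝ}

lemma mul_sq_lt_of_threshold_lt (hm : 0 < m) (he : 0 < e)
    (h : (P * b ^ 2 + m * P * b) / (m * e) < n) : P * b ^ 2 < m * (n * e - b * P) := by
  rw [div_lt_iff₀ (by positivity)] at h
  linarith

lemma two_mul_lt_sqrt_of_mul_sq_lt (hP : 0 < P) (hb : 0 ≤ b)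
    (h : P * b ^ 2 < m * (n * e - b * P)) : 2 * b * P < √(4 * m * P * (n * e - b * P)) := by
  rw [Real.lt_sqrt (by positivity)]
  nlinarith

lemma pos_of_sqrt_lt_two_mul {y : ℝ} (hP : 0 < P)
    (h : √(4 * m * P * (n * e - b * P)) < 2 * P * (b + n * y)) :
    0 < P * (b + n * y) ^ 2 + m * (b * P - n * e) := by
  have hpos : 0 < 2 * P * (b + n * y) := (Real.sqrt_nonneg _).trans_lt h
  rw [Real.sqrt_lt' hpos] at h
  have : 0 < 4 * P * (P * (b + n * y) ^ 2 + m * (b * P - n * e)) := by linarith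
  exact pos_of_mul_pos_right this (by positivity)

end

lemma discriminant_eq_sub {P a b e m n a₂ : ℝ} (ha₂ : a₂ = (b + m) * P + n * (e - a)) :
    a₂ ^ 2 - 4 * (P * n) * (e * (m + b) - a * b)
      = (2 * b * P - a₂) ^ 2 - 4 * m * P * (n * e - b * P) := by
  subst ha₂; ring

lemma neg_div_lt_add_sqrt_div {a b Δ : ℝ} (ha : 0 < a) (hΔ : 0 < Δ) :
    -b / (2 * a) < (-b + √Δ) / (2 * a) := by
  gcongr
  linarith [Real.sqrt_pos.mpr hΔ]

theorem E1_det_positive_general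
    (a b e g m n : ℝ) (hb : 0 < b) (hg : 0 < g) (hm : 0 < m) (hn : 0 < n)
    (he0 : 0 < e)
    (a1 a2 a3 a4 Δ y1 y3 : ℝ)
    (ha1 : a1 = (e * g + 1) * n)
    (ha2 : a2 = (b + m) * (e * g + 1) + n * (e - a))
    (ha3 : a3 = e * (m + b) - a * b)
    (ha4 : a4 = ((e * n - (b - m) * (e * g + 1)) +
        Real.sqrt (4 * m * (e * g + 1) * (n * e - b * (e * g + 1)))) / n)
    (hΔ : Δ = a2 ^ 2 - 4 * a1 * a3)
    (hy1 : y1 = (-a2 + Real.sqrt Δ) / (2 * a1))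
    (hy3 : y3 = -a2 / (2 * a1))
    (hn' : n > ((e * g + 1) * b ^ 2 + m * (e * g + 1) * b) / (m * e))
    (ha' : a4 < a) :
    y3 < y1 ∧
      (e * g + 1) * (b + n * y1) ^ 2 + m * (b * (e * g + 1) - n * e) > 0 ∧
      y1 * ((e * g + 1) * (b + n * y1) ^ 2 + m * (b * (e * g + 1) - n * e)) /
        ((1 + g * y1) * (b + n * y1) ^ 2) > 0 := by
  have hP : 0 < e * g + 1 := by positivity
  set P := e * g + 1
  set t := √(4 * m * P * (n * e - b * P))
  have hbt : 2 * b * P < t :=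
    two_mul_lt_sqrt_of_mul_sq_lt hP hb.le (mul_sq_lt_of_threshold_lt hm he0 hn')
  have htc : t < 2 * b * P - a2 := by
    rw [ha4, div_lt_iff₀ hn] at ha'
    rw [ha2]; linarith
  have hΔpos : 0 < Δ := by
    rw [hΔ, ha1, ha3, discriminant_eq_sub ha2, sub_pos,
      ← Real.sqrt_lt' ((Real.sqrt_nonneg _).trans_lt htc)]
    exact htc
  have hy1' : 2 * P * (b + n * y1) = 2 * b * P - a2 + √Δ := by
    rw [hy1, ha1]; field_simp; ring
  have hM : 0 < P * (b + n * y1) ^ 2 + m * (b * P - n * e) :=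
    pos_of_sqrt_lt_two_mul hP (by linarith [Real.sqrt_nonneg Δ])
  have hy1pos : 0 < y1 := by
    have : 0 < 2 * P * n * y1 := by linarith [Real.sqrt_nonneg Δ]
    exact pos_of_mul_pos_right this (by positivity)
  refine ⟨?_, hM, by positivity⟩
  rw [hy1, hy3]
  exact neg_div_lt_add_sqrt_div (by rw [ha1]; positivity) hΔpos

theorem E1_det_positive
    (a b e g m n : ℝ) (hb : 0 < b) (hg : 0 < g) (hm : 0 < m) (hn : 0 < n)
    (he0 : 0 < e) (he1 : e < 1)
    (a1 a2 a3 a4 Δ y1 y3 : ℝ)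
    (ha1 : a1 = (e * g + 1) * n)
    (ha2 : a2 = (b + m) * (e * g + 1) + n * (e - a))
    (ha3 : a3 = e * (m + b) - a * b)
    (ha4 : a4 = ((e * n - (b - m) * (e * g + 1)) +
        Real.sqrt (4 * m * (e * g + 1) * (n * e - b * (e * g + 1)))) / n)
    (hΔ : Δ = a2 ^ 2 - 4 * a1 * a3)
    (hy1 : y1 = (-a2 + Real.sqrt Δ) / (2 * a1))
    (hy3 : y3 = -a2 / (2 * a1))
    (hn' : n > ((e * g + 1) * b ^ 2 + m * (e * g + 1) * b) / (m * e))
    (ha' : a4 < a) (ha'' : a ≤ e * (m + b) / b) :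
    y3 < y1 ∧
      (e * g + 1) * (b + n * y1) ^ 2 + m * (b * (e * g + 1) - n * e) > 0 ∧
      y1 * ((e * g + 1) * (b + n * y1) ^ 2 + m * (b * (e * g + 1) - n * e)) /
        ((1 + g * y1) * (b + n * y1) ^ 2) > 0 :=
  E1_det_positive_general a b e g m n hb hg hm hn he0 a1 a2 a3 a4 Δ y1 y3 ha1 ha2 ha3 ha4 hΔ hy1 hy3
    hn' ha'
end
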